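/- Suppose f : ℝᵈ → ℝ is twice differentiable with ν-Hölder continuous Hessian with constant H_ν. Then for any convex combination z̄ = Σᵢ λᵢ zᵢ, ‖∇f(z̄) − Σᵢ λᵢ ∇f(zᵢ)‖ ≤ (H_ν/(1+ν)) (Σ_{i<j} λᵢ λⱼ ‖zᵢ − zⱼ‖²)^{(1+ν)/2}. -/

import Mathlib

/-!
A first-order Taylor expansion of `∇f` around `z̄` has remainder at most
`H/(1+ν) ‖y - z̄‖^(1+ν)`. Averaging these expansions at the points `zᵢ` with weights `λᵢ`, the
linear terms cancel because `Σ λᵢ (zᵢ - z̄) = 0`, so the Jensen gap of `∇f` is bounded by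
`H/(1+ν) Σ λᵢ ‖zᵢ - z̄‖^(1+ν)`. Since `1 + ν ≤ 2`, the power-mean inequality bounds this weighted
mean by `(Σ λᵢ ‖zᵢ - z̄‖²)^((1+ν)/2)`, and the weighted variance `Σ λᵢ ‖zᵢ - z̄‖²` equals
`Σ_{i<j} λᵢ λⱼ ‖zᵢ - zⱼ‖²`.
-/

open Finset

theorem sum_smul_sub_sum_smul_eq_zero {ι E : Type*} [Fintype ι] [AddCommGroup E] [Module ℝ E]
    (w : ι → ℝ) (hw : ∑ i, w i = 1) (z : ι → E) :
    ∑ i, w i • (z i - ∑ j, w j • z j) = 0 := by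
  simp_rw [smul_sub, sum_sub_distrib, ← sum_smul, hw, one_smul, sub_self]

theorem sum_sum_eq_two_nsmul_sum_sum_lt {ι M : Type*} [Fintype ι] [LinearOrder ι]
    [AddCommMonoid M] (F : ι → ι → M) (hsymm : ∀ i j, F i j = F j i) (hdiag : ∀ i, F i i = 0) :
    ∑ i, ∑ j, F i j = 2 • ∑ i, ∑ j with i < j, F i j := by
  have hsplit : ∀ i j, F i j = (if i < j then F i j else 0) + if j < i then F j i else 0 := by
    intro i j
    rcases lt_trichotomy i j with h | rfl | h
    · simp [h, h.not_gt]
    · simp [hdiag]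
    · simp [h, h.not_gt, hsymm i j]
  simp_rw [sum_filter, two_nsmul]
  rw [sum_congr rfl fun i _ => sum_congr rfl fun j _ => hsplit i j]
  simp only [sum_add_distrib]
  rw [sum_comm (f := fun i j => if j < i then F j i else 0)]

theorem sum_sum_mul_norm_sub_sq {ι E : Type*} [Fintype ι] [NormedAddCommGroup E]
    [InnerProductSpace ℝ E] (w : ι → ℝ) (hw : ∑ i, w i = 1) (z : ι → E) :
    ∑ i, ∑ j, w i * w j * ‖z i - z j‖ ^ 2 = 2 * ∑ i, w i * ‖z i - ∑ j, w j • z j‖ ^ 2 := by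
  set u := fun i => z i - ∑ j, w j • z j
  have hu : ∑ i, w i • u i = 0 := sum_smul_sub_sum_smul_eq_zero w hw z
  have hzu : ∀ i j, z i - z j = u i - u j := fun i j => by simp [u]
  have hmarg : ∀ a : ι → ℝ, ∑ i, ∑ j, w i * w j * a i = ∑ i, w i * a i := fun a => by
    simp only [mul_right_comm (w _) (w _) (a _), ← mul_sum, hw, mul_one]
  have hcross : ∑ i, ∑ j, w i * w j * (2 * inner ℝ (u i) (u j)) = 0 := by
    simp_rw [mul_left_comm _ (2 : ℝ), mul_assoc, ← mul_sum, ← real_inner_smul_right,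
      ← inner_sum, hu, inner_zero_right, mul_zero, sum_const_zero, mul_zero]
  calc ∑ i, ∑ j, w i * w j * ‖z i - z j‖ ^ 2
      = ∑ i, ∑ j, w i * w j * ‖u i‖ ^ 2 - ∑ i, ∑ j, w i * w j * (2 * inner ℝ (u i) (u j))
        + ∑ i, ∑ j, w i * w j * ‖u i‖ ^ 2 := by
        simp_rw [hzu, norm_sub_sq_real, mul_add, mul_sub, sum_add_distrib, sum_sub_distrib]
        rw [sum_comm (f := fun i j => w i * w j * ‖u j‖ ^ 2)]
        simp only [mul_comm (w _) (w _)]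
    _ = 2 * ∑ i, w i * ‖u i‖ ^ 2 := by rw [hcross, hmarg]; ring

theorem sum_mul_norm_sub_sum_smul_sq_eq_sum_sum_lt {ι E : Type*} [Fintype ι] [LinearOrder ι]
    [NormedAddCommGroup E] [InnerProductSpace ℝ E] (w : ι → ℝ) (hw : ∑ i, w i = 1) (z : ι → E) :
    ∑ i, w i * ‖z i - ∑ j, w j • z j‖ ^ 2 = ∑ i, ∑ j with i < j, w i * w j * ‖z i - z j‖ ^ 2 := by
  have h := sum_sum_mul_norm_sub_sq w hw z
  rw [sum_sum_eq_two_nsmul_sum_sum_lt _ (fun i j => by rw [norm_sub_rev, mul_comm (w i)])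
    (fun i => by simp), nsmul_eq_mul, Nat.cast_ofNat] at h
  linarith

theorem sum_mul_rpow_le_sum_mul_sq_rpow {ι : Type*} (s : Finset ι) (w a : ι → ℝ)
    (hw : ∀ i ∈ s, 0 ≤ w i) (hw1 : ∑ i ∈ s, w i = 1) (ha : ∀ i ∈ s, 0 ≤ a i) {q : ℝ}
    (hq0 : 0 < q) (hq2 : q ≤ 2) :
    ∑ i ∈ s, w i * a i ^ q ≤ (∑ i ∈ s, w i * a i ^ 2) ^ (q / 2) := by
  have hpow : ∀ i ∈ s, (a i ^ q) ^ (2 / q) = a i ^ 2 := fun i hi => by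
    rw [← Real.rpow_mul (ha i hi), mul_div_cancel₀ _ hq0.ne', Real.rpow_two]
  have := Real.arith_mean_le_rpow_mean s w (fun i => a i ^ q) hw hw1
    (fun i hi => Real.rpow_nonneg (ha i hi) q) ((one_le_div hq0).2 hq2)
  rwa [sum_congr rfl fun i hi => congrArg (w i * ·) (hpow i hi), one_div_div] at this

theorem norm_sub_sub_fderiv_le_of_holder {E F : Type*} [NormedAddCommGroup E] [NormedSpace ℝ E]
    [NormedAddCommGroup F] [NormedSpace ℝ F] {g : E → F} {ν H : ℝ} (hν : 0 ≤ ν)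
    (hg : ∀ x, DifferentiableAt ℝ g x)
    (hHolder : ∀ x y, ‖fderiv ℝ g x - fderiv ℝ g y‖ ≤ H * ‖x - y‖ ^ ν) (x y : E) :
    ‖g y - g x - fderiv ℝ g x (y - x)‖ ≤ H / (1 + ν) * ‖y - x‖ ^ (1 + ν) := by
  set δ := y - x
  set D := fderiv ℝ g x
  have hφ : ∀ t : ℝ, HasDerivAt (fun t : ℝ => g (x + t • δ) - g x - t • D δ)
      (fderiv ℝ g (x + t • δ) δ - D δ) t := fun t => by
    have hline : HasDerivAt (fun t : ℝ => x + t • δ) δ t := by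
      simpa using ((hasDerivAt_id t).smul_const δ).const_add x
    exact (((hg _).hasFDerivAt.comp_hasDerivAt t hline).sub_const (g x)).sub
      ((hasDerivAt_id' t).smul_const (D δ) |>.congr_deriv (one_smul ℝ _))
  -- The remainder along the segment is fenced by this barrier, whose derivative dominates its own.
  have hB : ∀ t : ℝ, HasDerivAt (fun t : ℝ => H / (1 + ν) * ‖δ‖ ^ (1 + ν) * t ^ (1 + ν))
      (H * ‖δ‖ ^ (1 + ν) * t ^ ν) t := fun t => by
    refine ((Real.hasDerivAt_rpow_const (p := 1 + ν) (Or.inr (by linarith))).const_mul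
      (H / (1 + ν) * ‖δ‖ ^ (1 + ν))).congr_deriv ?_
    rw [add_sub_cancel_left]
    field_simp
  have bound : ∀ t ∈ Set.Ico (0 : ℝ) 1,
      ‖fderiv ℝ g (x + t • δ) δ - D δ‖ ≤ H * ‖δ‖ ^ (1 + ν) * t ^ ν := fun t ht => calc
    ‖fderiv ℝ g (x + t • δ) δ - D δ‖ = ‖(fderiv ℝ g (x + t • δ) - D) δ‖ := rfl
    _ ≤ H * ‖t • δ‖ ^ ν * ‖δ‖ := by
      refine ((fderiv ℝ g (x + t • δ) - D).le_opNorm δ).trans ?_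
      gcongr
      simpa using hHolder (x + t • δ) x
    _ = H * ‖δ‖ ^ (1 + ν) * t ^ ν := by
      rw [norm_smul, Real.norm_of_nonneg ht.1, Real.mul_rpow ht.1 (norm_nonneg δ),
        Real.rpow_add' (norm_nonneg δ) (by linarith), Real.rpow_one]
      ring
  have := image_norm_le_of_norm_deriv_right_le_deriv_boundary
    (fun t _ => (hφ t).continuousAt.continuousWithinAt) (fun t _ => (hφ t).hasDerivWithinAt)
    (by simp [Real.zero_rpow (by linarith : 1 + ν ≠ 0)]) hB bound (Set.right_mem_Icc.2 zero_le_one)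
  simpa [δ] using this

theorem norm_apply_sum_smul_sub_sum_smul_apply_le {ι E F : Type*} [Fintype ι]
    [NormedAddCommGroup E] [NormedSpace ℝ E] [NormedAddCommGroup F] [NormedSpace ℝ F]
    {g : E → F} {ν H : ℝ} (hν : 0 ≤ ν) (hg : ∀ x, DifferentiableAt ℝ g x)
    (hHolder : ∀ x y, ‖fderiv ℝ g x - fderiv ℝ g y‖ ≤ H * ‖x - y‖ ^ ν)
    (w : ι → ℝ) (hw0 : ∀ i, 0 ≤ w i) (hw : ∑ i, w i = 1) (z : ι → E) :
    ‖g (∑ i, w i • z i) - ∑ i, w i • g (z i)‖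
      ≤ H / (1 + ν) * ∑ i, w i * ‖z i - ∑ j, w j • z j‖ ^ (1 + ν) := by
  set zbar := ∑ j, w j • z j
  set D := fderiv ℝ g zbar
  have hcentered : ∑ i, w i • (z i - zbar) = 0 := sum_smul_sub_sum_smul_eq_zero w hw z
  have hlin : ∑ i, w i • D (z i - zbar) = 0 := by
    simp_rw [← D.map_smul, ← map_sum, hcentered, map_zero]
  have hsplit : g zbar - ∑ i, w i • g (z i)
      = -∑ i, w i • (g (z i) - g zbar - D (z i - zbar)) := by
    simp_rw [smul_sub, sum_sub_distrib, hlin, ← sum_smul, hw, one_smul]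
    abel
  rw [hsplit, norm_neg, mul_sum]
  refine (norm_sum_le _ _).trans (sum_le_sum fun i _ => ?_)
  rw [norm_smul, Real.norm_of_nonneg (hw0 i), mul_left_comm]
  exact mul_le_mul_of_nonneg_left
    (norm_sub_sub_fderiv_le_of_holder hν hg hHolder zbar (z i)) (hw0 i)

theorem gradient_jensen_pairwise_general (d n : ℕ) (f : EuclideanSpace ℝ (Fin d) → ℝ)
    (hf' : ∀ x, DifferentiableAt ℝ (gradient f) x)
    (ν : ℝ) (hν0 : 0 ≤ ν) (hν1 : ν ≤ 1)
    (H : ℝ) (hH : 0 ≤ H)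
    (hHolder : ∀ x y, ‖fderiv ℝ (gradient f) x - fderiv ℝ (gradient f) y‖ ≤ H * ‖x - y‖ ^ ν)
    (z : Fin n → EuclideanSpace ℝ (Fin d)) (lam : Fin n → ℝ)
    (hlam : ∀ i, 0 ≤ lam i) (hsum : ∑ i, lam i = 1)
    (zbar : EuclideanSpace ℝ (Fin d)) (hzbar : zbar = ∑ i, lam i • z i) :
    ‖gradient f zbar - ∑ i, lam i • gradient f (z i)‖
      ≤ H / (1 + ν) *
        (∑ i, ∑ j with i < j, lam i * lam j * ‖z i - z j‖ ^ 2) ^ ((1 + ν) / 2) := by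
  subst hzbar
  calc _ ≤ H / (1 + ν) * ∑ i, lam i * ‖z i - ∑ j, lam j • z j‖ ^ (1 + ν) :=
        norm_apply_sum_smul_sub_sum_smul_apply_le hν0 hf' hHolder lam hlam hsum z
    _ ≤ H / (1 + ν) * (∑ i, lam i * ‖z i - ∑ j, lam j • z j‖ ^ 2) ^ ((1 + ν) / 2) := by
        refine mul_le_mul_of_nonneg_left ?_ (by positivity)
        exact sum_mul_rpow_le_sum_mul_sq_rpow _ _ _ (fun i _ => hlam i) hsum
          (fun i _ => norm_nonneg _) (by linarith) (by linarith)
    _ = _ := by rw [sum_mul_norm_sub_sum_smul_sq_eq_sum_sum_lt lam hsum z]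

theorem gradient_jensen_pairwise (d n : ℕ) (f : EuclideanSpace ℝ (Fin d) → ℝ)
    (hf : ∀ x, DifferentiableAt ℝ f x)
    (hf' : ∀ x, DifferentiableAt ℝ (gradient f) x)
    (ν : ℝ) (hν0 : 0 ≤ ν) (hν1 : ν ≤ 1)
    (H : ℝ) (hH : 0 ≤ H)
    (hHolder : ∀ x y, ‖fderiv ℝ (gradient f) x - fderiv ℝ (gradient f) y‖ ≤ H * ‖x - y‖ ^ ν)
    (z : Fin n → EuclideanSpace ℝ (Fin d)) (lam : Fin n → ℝ)
    (hlam : ∀ i, 0 ≤ lam i) (hsum : ∑ i, lam i = 1)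
    (zbar : EuclideanSpace ℝ (Fin d)) (hzbar : zbar = ∑ i, lam i • z i) :
    ‖gradient f zbar - ∑ i, lam i • gradient f (z i)‖
      ≤ H / (1 + ν) *
        (∑ i, ∑ j with i < j, lam i * lam j * ‖z i - z j‖ ^ 2) ^ ((1 + ν) / 2) :=
  gradient_jensen_pairwise_general d n f hf' ν hν0 hν1 H hH hHolder z lam hlam hsum zbar hzbar
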